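/- Let T be a bounded linear operator on a complex Hilbert space. Then w(T)² ≤ (α/2) w(T²) + ‖(α/4)|T|² + (1 - 3α/4)|T*|²‖ for every α ∈ [0,1]; in particular, taking α = 1 recovers w(T)² ≤ (1/2)w(T²) + (1/4)‖|T|² + |T*|²‖. -/

import Mathlib

/-!
Buzano's inequality `2 |⟪a, e⟫ ⟪e, b⟫| ≤ ‖a‖ ‖b‖ + |⟪a, b⟫|` for a unit vector `e`, applied to
`a = T x`, `b = T† x`, `e = x`, gives `2 |⟪T x, x⟫|² ≤ ‖T x‖ ‖T† x‖ + |⟪T² x, x⟫|`. Averaging this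
(with weight `α`, after `2 ‖T x‖ ‖T† x‖ ≤ ‖T x‖² + ‖T† x‖²`) with `|⟪T x, x⟫|² ≤ ‖T† x‖²`
(with weight `1 - α`) bounds `|⟪T x, x⟫|²` by `α/2 |⟪T² x, x⟫|` plus the quadratic form of
`α/4 T†T + (1 - 3α/4) TT†` at `x`.
-/

open ContinuousLinearMap in
/-- The numerical radius `w(T) = sup { |⟨Tx,x⟩| : ‖x‖ = 1 }`. -/
noncomputable def numRad {H : Type*} [NormedAddCommGroup H] [InnerProductSpace ℂ H]
    (T : H →L[ℂ] H) : ℝ :=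
  sSup {r : ℝ | ∃ x : H, ‖x‖ = 1 ∧ r = ‖(inner ℂ (T x) x : ℂ)‖}

/-- `|T| = (T^*T)^{1/2}`; note `absOp (adjoint T) = (TT^*)^{1/2} = |T^*|`. -/
noncomputable def absOp {H : Type*} [NormedAddCommGroup H] [InnerProductSpace ℂ H]
    [CompleteSpace H] (T : H →L[ℂ] H) : H →L[ℂ] H :=
  CFC.sqrt (ContinuousLinearMap.adjoint T * T)

/-- Real powers of a (positive) operator via the continuous functional calculus. -/
noncomputable def opRPow {H : Type*} [NormedAddCommGroup H] [InnerProductSpace ℂ H]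
    [CompleteSpace H] (A : H →L[ℂ] H) (r : ℝ) : H →L[ℂ] H :=
  CFC.rpow A r

open ContinuousLinearMap

section Buzano

variable {𝕜 E : Type*} [RCLike 𝕜] [NormedAddCommGroup E] [InnerProductSpace 𝕜 E]

local notation "⟪" x ", " y "⟫" => inner 𝕜 x y

theorem norm_inner_mul_inner_le_of_norm_eq_one (a b : E) {e : E} (he : ‖e‖ = 1) :
    2 * ‖⟪a, e⟫ * ⟪e, b⟫‖ ≤ ‖a‖ * ‖b‖ + ‖⟪a, b⟫‖ := by
  set R := (𝕜 ∙ e).reflection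
  have hRa : ⟪R a, b⟫ = 2 * (⟪a, e⟫ * ⟪e, b⟫) - ⟪a, b⟫ := by
    rw [Submodule.reflection_apply, Submodule.starProjection_unit_singleton 𝕜 he, inner_sub_left,
      two_smul, inner_add_left, inner_smul_left, inner_conj_symm]
    ring
  calc 2 * ‖⟪a, e⟫ * ⟪e, b⟫‖ = ‖⟪R a, b⟫ + ⟪a, b⟫‖ := by
        rw [hRa, sub_add_cancel, norm_mul (2 : 𝕜), RCLike.norm_two]
    _ ≤ ‖R a‖ * ‖b‖ + ‖⟪a, b⟫‖ := (norm_add_le _ _).trans (by gcongr; exact norm_inner_le_norm _ _)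
    _ = ‖a‖ * ‖b‖ + ‖⟪a, b⟫‖ := by rw [LinearIsometryEquiv.norm_map]

end Buzano

section NumericalRadius

variable {H : Type*} [NormedAddCommGroup H] [InnerProductSpace ℂ H]

local notation "⟪" x ", " y "⟫" => inner ℂ x y

theorem norm_inner_apply_self_le_opNorm (A : H →L[ℂ] H) {x : H} (hx : ‖x‖ = 1) :
    ‖⟪A x, x⟫‖ ≤ ‖A‖ :=
  calc ‖⟪A x, x⟫‖ ≤ ‖A x‖ * ‖x‖ := norm_inner_le_norm _ _
    _ ≤ ‖A‖ := by simpa [hx] using A.le_opNorm x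

theorem numRad_nonneg (T : H →L[ℂ] H) : 0 ≤ numRad T :=
  Real.sSup_nonneg (by rintro _ ⟨x, -, rfl⟩; exact norm_nonneg _)

theorem norm_inner_apply_self_le_numRad (T : H →L[ℂ] H) {x : H} (hx : ‖x‖ = 1) :
    ‖⟪T x, x⟫‖ ≤ numRad T :=
  le_csSup ⟨‖T‖, by rintro _ ⟨y, hy, rfl⟩; exact norm_inner_apply_self_le_opNorm T hy⟩ ⟨x, hx, rfl⟩

theorem numRad_sq_le_of_forall {T : H →L[ℂ] H} {c : ℝ} (hc : 0 ≤ c)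
    (h : ∀ x : H, ‖x‖ = 1 → ‖⟪T x, x⟫‖ ^ 2 ≤ c) : numRad T ^ 2 ≤ c := by
  have : numRad T ≤ √c :=
    Real.sSup_le (by rintro _ ⟨x, hx, rfl⟩; exact Real.le_sqrt_of_sq_le (h x hx)) (Real.sqrt_nonneg c)
  calc numRad T ^ 2 ≤ √c ^ 2 := pow_le_pow_left₀ (numRad_nonneg T) this 2
    _ = c := Real.sq_sqrt hc

variable [CompleteSpace H]

theorem two_mul_norm_inner_apply_self_sq_le (T : H →L[ℂ] H) {x : H} (hx : ‖x‖ = 1) :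
    2 * ‖⟪T x, x⟫‖ ^ 2 ≤ ‖T x‖ * ‖adjoint T x‖ + ‖⟪T (T x), x⟫‖ := by
  have := norm_inner_mul_inner_le_of_norm_eq_one (𝕜 := ℂ) (T x) (adjoint T x) hx
  rwa [adjoint_inner_right, adjoint_inner_right, norm_mul, ← sq] at this

theorem re_inner_smul_adjoint_mul_self_add_smul_mul_adjoint_apply (T : H →L[ℂ] H) (s t : ℝ)
    (x : H) :
    (⟪(s • (adjoint T * T) + t • (T * adjoint T)) x, x⟫).re =
      s * ‖T x‖ ^ 2 + t * ‖adjoint T x‖ ^ 2 := by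
  have hT := apply_norm_sq_eq_inner_adjoint_left T x
  have hT' := apply_norm_sq_eq_inner_adjoint_left (adjoint T) x
  rw [adjoint_adjoint] at hT'
  simp only [add_apply, smul_apply, ← Complex.coe_smul, inner_add_left, inner_smul_left,
    Complex.conj_ofReal, Complex.add_re, Complex.re_ofReal_mul]
  rw [hT, hT']
  rfl

theorem norm_inner_apply_self_sq_le (T : H →L[ℂ] H) {α : ℝ} (hα₀ : 0 ≤ α) (hα₁ : α ≤ 1)
    {x : H} (hx : ‖x‖ = 1) :
    ‖⟪T x, x⟫‖ ^ 2 ≤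
      α / 2 * numRad (T * T) + ‖(α / 4) • (adjoint T * T) + (1 - 3 * α / 4) • (T * adjoint T)‖ := by
  set S := (α / 4) • (adjoint T * T) + (1 - 3 * α / 4) • (T * adjoint T)
  have hBuzano := two_mul_norm_inner_apply_self_sq_le T hx
  have hT2 : ‖⟪T (T x), x⟫‖ ≤ numRad (T * T) := norm_inner_apply_self_le_numRad (T * T) hx
  have hle_adjoint : ‖⟪T x, x⟫‖ ≤ ‖adjoint T x‖ := by
    simpa [← adjoint_inner_right, hx] using norm_inner_le_norm (𝕜 := ℂ) x (adjoint T x)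
  have hsq_adjoint := pow_le_pow_left₀ (norm_nonneg _) hle_adjoint 2
  have hS : α / 4 * ‖T x‖ ^ 2 + (1 - 3 * α / 4) * ‖adjoint T x‖ ^ 2 ≤ ‖S‖ := by
    rw [← re_inner_smul_adjoint_mul_self_add_smul_mul_adjoint_apply]
    exact (Complex.re_le_norm _).trans (norm_inner_apply_self_le_opNorm S hx)
  linarith [mul_le_mul_of_nonneg_left hBuzano hα₀, mul_le_mul_of_nonneg_left hT2 hα₀,
    mul_le_mul_of_nonneg_left hsq_adjoint (sub_nonneg.2 hα₁),
    mul_nonneg hα₀ (sq_nonneg (‖T x‖ - ‖adjoint T x‖))]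

end NumericalRadius

theorem stmt11 {H : Type*} [NormedAddCommGroup H] [InnerProductSpace ℂ H] [CompleteSpace H]
    (T : H →L[ℂ] H) :
    (∀ α : ℝ, 0 ≤ α → α ≤ 1 →
      numRad T ^ 2 ≤
        (α / 2) * numRad (T * T) +
          ‖(α / 4) • (ContinuousLinearMap.adjoint T * T) +
            (1 - 3 * α / 4) • (T * ContinuousLinearMap.adjoint T)‖) ∧
    numRad T ^ 2 ≤
      (1 / 2) * numRad (T * T) +
        (1 / 4) * ‖ContinuousLinearMap.adjoint T * T + T * ContinuousLinearMap.adjoint T‖ := by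
  have hα : ∀ α : ℝ, 0 ≤ α → α ≤ 1 →
      numRad T ^ 2 ≤
        (α / 2) * numRad (T * T) +
          ‖(α / 4) • (adjoint T * T) + (1 - 3 * α / 4) • (T * adjoint T)‖ := fun α hα₀ hα₁ =>
    numRad_sq_le_of_forall (by have := numRad_nonneg (T * T); positivity)
      fun x hx => norm_inner_apply_self_sq_le T hα₀ hα₁ hx
  refine ⟨hα, ?_⟩
  convert hα 1 zero_le_one le_rfl using 2
  rw [show (1 : ℝ) - 3 * 1 / 4 = 1 / 4 by norm_num, ← smul_add, norm_smul, Real.norm_of_nonneg]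
  all_goals norm_num
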